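/- Let L be a homogeneous polynomial of degree l in d variables and let F_k := {F ∈ H_k : ⟨f, F⟩ = 0 for all f ∈ J^∧ ∩ H_k}, where J = ⟨q⟩ with q^∧ = L. Then F_k = ker L̄(D) ∩ H_k; in particular dim(ker L̄(D) ∩ H_k) = dim H_k − dim H_{k−l}. -/

import Mathlib

open MvPolynomial

/-- The constant-coefficient differential operator `L(D)` obtained from a polynomial `L`
by substituting `∂/∂xⱼ` for `xⱼ`. -/
noncomputable def diffOp {d : ℕ} (L : MvPolynomial (Fin d) ℂ) :
    MvPolynomial (Fin d) ℂ →ₗ[ℂ] MvPolynomial (Fin d) ℂ :=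
  ∑ α ∈ L.support, L.coeff α •
    ((List.finRange d).map
      (fun j => ((pderiv j).toLinearMap : Module.End ℂ (MvPolynomial (Fin d) ℂ)) ^ (α j))).prod

/-- The lowest-degree non-vanishing monomial of `L` has degree `l`. -/
def lowestDegree {d : ℕ} (L : MvPolynomial (Fin d) ℂ) (l : ℕ) : Prop :=
  (∀ k < l, homogeneousComponent k L = 0) ∧ homogeneousComponent l L ≠ 0


/-- The polynomial with complex-conjugated coefficients. -/
noncomputable def conjPoly {d : ℕ} (L : MvPolynomial (Fin d) ℂ) : MvPolynomial (Fin d) ℂ :=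
  MvPolynomial.map (starRingEnd ℂ) L

/-- The Fischer (apolar) pairing `⟨f, L⟩ = L̄(D) f`. -/
noncomputable def fischer {d : ℕ} (f L : MvPolynomial (Fin d) ℂ) : MvPolynomial (Fin d) ℂ :=
  diffOp (conjPoly L) f

/-!
For the Fischer inner product `⟨f, F⟩ = ∑ α! f_α conj(F_α)`, multiplication by `L` is adjoint
to `L̄(D)`. Leading forms multiply in a domain, so the leading forms of the elements of `(q)` are
the multiples `L·h`; hence a form `F ∈ H_k` is orthogonal to `(q)^∧ ∩ H_k` iff
`⟨h, L̄(D)F⟩ = 0` for all `h ∈ H_{k-l}`, i.e. iff `L̄(D)F = 0` (take `h = L̄(D)F`).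
Positive definiteness also makes `p ↦ L̄(D)(L·p)` injective, hence bijective, on `H_{k-l}`;
so `L̄(D)` maps `H_k` onto `H_{k-l}`, and rank–nullity gives the dimension.
-/

namespace MvPolynomial

variable {σ R : Type*} [CommSemiring R]

theorem coeff_pderiv_pow (i : σ) (n : ℕ) (p : MvPolynomial σ R) (m : σ →₀ ℕ) :
    coeff m (((pderiv i).toLinearMap ^ n : Module.End R (MvPolynomial σ R)) p) =
      coeff (m + Finsupp.single i n) p * ((m i + n).descFactorial n : ℕ) := by
  induction n generalizing p with
  | zero => simp
  | succ n ih =>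
    rw [pow_succ, Module.End.mul_apply, ih, Derivation.coeFn_coe, coeff_pderiv,
      add_assoc, ← Finsupp.single_add, ← add_assoc (m i), Nat.succ_descFactorial_succ]
    simp only [Finsupp.add_apply, Finsupp.single_eq_same]
    push_cast
    ring

theorem coeff_list_prod_pderiv_pow (α : σ →₀ ℕ) (p : MvPolynomial σ R) :
    ∀ l : List σ, l.Nodup → ∀ m : σ →₀ ℕ,
      coeff m ((l.map fun i => ((pderiv i).toLinearMap ^ α i : Module.End R _)).prod p) =
        coeff (m + (l.map fun i => Finsupp.single i (α i)).sum) p *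
          ((l.map fun i => (m i + α i).descFactorial (α i)).prod : ℕ)
  | [], _, m => by simp
  | i :: l, hil, m => by
    obtain ⟨hi, hl⟩ := List.nodup_cons.mp hil
    have hm : (l.map fun j => ((m + Finsupp.single i (α i)) j + α j).descFactorial (α j)) =
        l.map fun j => (m j + α j).descFactorial (α j) :=
      List.map_congr_left fun j hj => by
        rw [Finsupp.add_apply, Finsupp.single_eq_of_ne (by rintro rfl; exact hi hj), add_zero]
    rw [List.map_cons, List.prod_cons, Module.End.mul_apply, coeff_pderiv_pow,
      coeff_list_prod_pderiv_pow α p l hl, hm, List.map_cons, List.sum_cons, List.map_cons,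
      List.prod_cons, add_assoc]
    push_cast
    ring

theorem homogeneousComponent_totalDegree_add_mul (a b : MvPolynomial σ R) :
    homogeneousComponent (a.totalDegree + b.totalDegree) (a * b) =
      homogeneousComponent a.totalDegree a * homogeneousComponent b.totalDegree b := by
  classical
  ext δ
  rw [coeff_homogeneousComponent]
  split_ifs with hδ
  · rw [coeff_mul, coeff_mul]
    refine Finset.sum_congr rfl fun ⟨u, v⟩ huv => ?_
    rw [Finset.HasAntidiagonal.mem_antidiagonal] at huv
    have hdeg : u.degree + v.degree = a.totalDegree + b.totalDegree := by
      rw [← map_add, huv, hδ]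
    simp only [coeff_homogeneousComponent]
    rcases lt_trichotomy u.degree a.totalDegree with hu | hu | hu
    · rw [coeff_eq_zero_of_totalDegree_lt (show b.totalDegree < v.degree by omega)]
      simp
    · rw [if_pos hu, if_pos (by omega)]
    · rw [coeff_eq_zero_of_totalDegree_lt hu]
      simp
  · exact (((homogeneousComponent_isHomogeneous _ a).mul
      (homogeneousComponent_isHomogeneous _ b)).coeff_eq_zero hδ).symm

theorem homogeneousComponent_totalDegree_mul [NoZeroDivisors R] {a b : MvPolynomial σ R}
    (ha : a ≠ 0) (hb : b ≠ 0) :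
    homogeneousComponent (a * b).totalDegree (a * b) =
      homogeneousComponent a.totalDegree a * homogeneousComponent b.totalDegree b := by
  rw [totalDegree_mul_of_isDomain ha hb, homogeneousComponent_totalDegree_add_mul]

theorem exists_homogeneousComponent_totalDegree_eq_mul_of_mem_span_singleton
    [NoZeroDivisors R] {q g : MvPolynomial σ R} (hg : g ∈ Ideal.span {q}) :
    ∃ h, homogeneousComponent g.totalDegree g = homogeneousComponent q.totalDegree q * h := by
  obtain ⟨h, rfl⟩ := Ideal.mem_span_singleton.mp hg
  rcases eq_or_ne q 0 with rfl | hq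
  · exact ⟨0, by simp⟩
  rcases eq_or_ne h 0 with rfl | hh
  · exact ⟨0, by simp⟩
  exact ⟨_, homogeneousComponent_totalDegree_mul hq hh⟩

theorem homogeneousComponent_totalDegree_mul_of_isHomogeneous [NoZeroDivisors R]
    (q : MvPolynomial σ R) {G : MvPolynomial σ R} {n : ℕ} (hG : G.IsHomogeneous n) :
    homogeneousComponent (q * G).totalDegree (q * G) =
      homogeneousComponent q.totalDegree q * G := by
  rcases eq_or_ne q 0 with rfl | hq
  · simp
  rcases eq_or_ne G 0 with rfl | hG0
  · simp
  rw [homogeneousComponent_totalDegree_mul hq hG0, hG.totalDegree hG0,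
    homogeneousComponent_eq_self hG]

instance {K : Type*} [Field K] [Finite σ] (n : ℕ) :
    FiniteDimensional K (homogeneousSubmodule σ K n) :=
  Submodule.finiteDimensional_of_le (S₂ := restrictTotalDegree σ K n) fun _ hp =>
    (mem_restrictTotalDegree _ _ _).mpr ((mem_homogeneousSubmodule _ _).mp hp).totalDegree_le

end MvPolynomial

theorem Submodule.finrank_ker_inf_add_finrank_map {K V W : Type*} [DivisionRing K]
    [AddCommGroup V] [Module K V] [AddCommGroup W] [Module K W] (f : V →ₗ[K] W)
    (p : Submodule K V) [FiniteDimensional K p] :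
    Module.finrank K ↥(LinearMap.ker f ⊓ p) + Module.finrank K ↥(p.map f) =
      Module.finrank K p := by
  have hker : Module.finrank K ↥(LinearMap.ker f ⊓ p) =
      Module.finrank K ↥(LinearMap.ker (f.domRestrict p)) := by
    rw [LinearMap.ker_domRestrict, ← inf_top_eq (comap p.subtype _), ← comap_subtype_self p,
      ← comap_inf]
    exact (comapSubtypeEquivOfLe inf_le_right).finrank_eq.symm
  rw [hker, ← LinearMap.range_domRestrict, add_comm, LinearMap.finrank_range_add_finrank_ker]

theorem Finsupp.prod_factorial_add {σ R : Type*} [Fintype σ] [CommSemiring R]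
    (α β : σ →₀ ℕ) :
    ∏ j, (((α + β) j).factorial : R) =
      (∏ j, ((α j).factorial : R)) * ∏ j, ((α j + β j).descFactorial (β j) : R) := by
  rw [← Finset.prod_mul_distrib]
  refine Finset.prod_congr rfl fun j _ => ?_
  have := Nat.factorial_mul_descFactorial (Nat.le_add_left (β j) (α j))
  rw [Nat.add_sub_cancel] at this
  rw [Finsupp.add_apply, ← this]
  push_cast
  rfl

section

variable {d : ℕ}

noncomputable def iteratedPDeriv {R : Type*} [CommSemiring R] (α : Fin d →₀ ℕ) :
    Module.End R (MvPolynomial (Fin d) R) :=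
  ((List.finRange d).map fun j => ((pderiv j).toLinearMap : Module.End R _) ^ α j).prod

theorem coeff_iteratedPDeriv {R : Type*} [CommSemiring R] (α β : Fin d →₀ ℕ)
    (f : MvPolynomial (Fin d) R) :
    coeff β (iteratedPDeriv α f) =
      coeff (β + α) f * ∏ j, ((β j + α j).descFactorial (α j) : R) := by
  rw [iteratedPDeriv, coeff_list_prod_pderiv_pow α f _ (List.nodup_finRange d),
    ← Fin.sum_univ_def, Finsupp.univ_sum_single, ← Fin.prod_univ_def, Nat.cast_prod]

theorem diffOp_eq_sum_of_support_subset {L : MvPolynomial (Fin d) ℂ}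
    {s : Finset (Fin d →₀ ℕ)} (h : L.support ⊆ s) :
    diffOp L = ∑ α ∈ s, coeff α L • iteratedPDeriv α :=
  Finset.sum_subset h fun α _ hα => by rw [notMem_support_iff.mp hα, zero_smul]

theorem diffOp_add (L M : MvPolynomial (Fin d) ℂ) : diffOp (L + M) = diffOp L + diffOp M := by
  classical
  rw [diffOp_eq_sum_of_support_subset support_add,
    diffOp_eq_sum_of_support_subset Finset.subset_union_left,
    diffOp_eq_sum_of_support_subset Finset.subset_union_right, ← Finset.sum_add_distrib]
  simp only [coeff_add, add_smul]

theorem diffOp_monomial (α : Fin d →₀ ℕ) (c : ℂ) :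
    diffOp (monomial α c) = c • iteratedPDeriv α := by
  classical
  rw [diffOp_eq_sum_of_support_subset support_monomial_subset, Finset.sum_singleton,
    coeff_monomial, if_pos rfl]

theorem coeff_diffOp (L f : MvPolynomial (Fin d) ℂ) (β : Fin d →₀ ℕ) :
    coeff β (diffOp L f) = ∑ α ∈ L.support,
      coeff α L * (coeff (β + α) f * ∏ j, ((β j + α j).descFactorial (α j) : ℂ)) := by
  rw [diffOp, LinearMap.sum_apply, coeff_sum]
  exact Finset.sum_congr rfl fun α _ => by
    rw [LinearMap.smul_apply, coeff_smul, smul_eq_mul, ← iteratedPDeriv, coeff_iteratedPDeriv]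

theorem degree_add_eq_of_coeff_diffOp_ne_zero {L f : MvPolynomial (Fin d) ℂ} {l k : ℕ}
    (hL : L.IsHomogeneous l) (hf : f.IsHomogeneous k) {β : Fin d →₀ ℕ}
    (h : coeff β (diffOp L f) ≠ 0) : β.degree + l = k := by
  rw [coeff_diffOp] at h
  obtain ⟨α, -, hα⟩ := Finset.exists_ne_zero_of_sum_ne_zero h
  have hαL : α.degree = l := by
    by_contra hne
    exact hα (by rw [hL.coeff_eq_zero hne, zero_mul])
  have hβαf : (β + α).degree = k := by
    by_contra hne
    exact hα (by rw [hf.coeff_eq_zero hne, zero_mul, mul_zero])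
  rwa [map_add, hαL] at hβαf

theorem isHomogeneous_diffOp {L f : MvPolynomial (Fin d) ℂ} {l k : ℕ}
    (hL : L.IsHomogeneous l) (hf : f.IsHomogeneous k) : (diffOp L f).IsHomogeneous (k - l) :=
  fun β hβ => by
    have := degree_add_eq_of_coeff_diffOp_ne_zero hL hf hβ
    show Finsupp.weight (fun _ => 1) β = k - l
    rw [← Finsupp.degree_eq_weight_one]
    omega

theorem diffOp_eq_zero_of_lt {L f : MvPolynomial (Fin d) ℂ} {l k : ℕ}
    (hL : L.IsHomogeneous l) (hf : f.IsHomogeneous k) (hkl : k < l) : diffOp L f = 0 := by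
  ext β
  by_contra h
  have := degree_add_eq_of_coeff_diffOp_ne_zero hL hf h
  omega

open Nat ComplexConjugate

theorem coeff_conjPoly (F : MvPolynomial (Fin d) ℂ) (α : Fin d →₀ ℕ) :
    coeff α (conjPoly F) = conj (coeff α F) :=
  coeff_map _ _ _

theorem support_conjPoly (F : MvPolynomial (Fin d) ℂ) : (conjPoly F).support = F.support := by
  ext α
  simp [coeff_conjPoly]

theorem conjPoly_add (F G : MvPolynomial (Fin d) ℂ) :
    conjPoly (F + G) = conjPoly F + conjPoly G :=
  map_add _ _ _

theorem conjPoly_monomial (α : Fin d →₀ ℕ) (c : ℂ) :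
    conjPoly (monomial α c) = monomial α (conj c) :=
  map_monomial _ _ _

theorem isHomogeneous_conjPoly {F : MvPolynomial (Fin d) ℂ} {n : ℕ} (hF : F.IsHomogeneous n) :
    (conjPoly F).IsHomogeneous n :=
  hF.map _

/-- The Fischer inner product `⟨f, F⟩`: for `f`, `F` of the same degree, `fischer f F` is the
constant polynomial `C (fischerForm f F)`. -/
noncomputable def fischerForm (f F : MvPolynomial (Fin d) ℂ) : ℂ :=
  coeff 0 (fischer f F)

theorem fischerForm_eq_sum (f F : MvPolynomial (Fin d) ℂ) :
    fischerForm f F = ∑ α ∈ F.support, conj (coeff α F) * coeff α f * ∏ j, ((α j)! : ℂ) := by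
  rw [fischerForm, fischer, coeff_diffOp, support_conjPoly]
  refine Finset.sum_congr rfl fun α _ => ?_
  simp only [coeff_conjPoly, zero_add, Finsupp.coe_zero, Pi.zero_apply, descFactorial_self,
    mul_assoc]

theorem fischerForm_monomial_left (α : Fin d →₀ ℕ) (c : ℂ) (F : MvPolynomial (Fin d) ℂ) :
    fischerForm (monomial α c) F = conj (coeff α F) * c * ∏ j, ((α j)! : ℂ) := by
  classical
  rw [fischerForm_eq_sum, Finset.sum_eq_single α]
  · rw [coeff_monomial, if_pos rfl]
  · intro β _ hβ
    rw [coeff_monomial, if_neg (Ne.symm hβ), mul_zero, zero_mul]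
  · intro hα
    rw [notMem_support_iff.mp hα, map_zero, zero_mul, zero_mul]

theorem fischerForm_add_left (f g F : MvPolynomial (Fin d) ℂ) :
    fischerForm (f + g) F = fischerForm f F + fischerForm g F := by
  rw [fischerForm, fischer, map_add, coeff_add]
  rfl

theorem fischerForm_add_right (f F G : MvPolynomial (Fin d) ℂ) :
    fischerForm f (F + G) = fischerForm f F + fischerForm f G := by
  rw [fischerForm, fischer, conjPoly_add, diffOp_add, LinearMap.add_apply, coeff_add]
  rfl

theorem fischerForm_zero_right (f : MvPolynomial (Fin d) ℂ) : fischerForm f 0 = 0 := by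
  rw [fischerForm_eq_sum, support_zero, Finset.sum_empty]

theorem fischerForm_mul_left (L p F : MvPolynomial (Fin d) ℂ) :
    fischerForm (L * p) F = fischerForm p (diffOp (conjPoly L) F) := by
  induction L using MvPolynomial.induction_on' generalizing p with
  | add L M hL hM =>
    rw [add_mul, fischerForm_add_left, hL, hM, conjPoly_add, diffOp_add, LinearMap.add_apply,
      fischerForm_add_right]
  | monomial δ c =>
    induction p using MvPolynomial.induction_on' with
    | add p r hp hr => rw [mul_add, fischerForm_add_left, hp, hr, fischerForm_add_left]
    | monomial β e =>
      rw [monomial_mul, fischerForm_monomial_left, fischerForm_monomial_left, conjPoly_monomial,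
        diffOp_monomial, LinearMap.smul_apply, coeff_smul, coeff_iteratedPDeriv, add_comm δ β,
        Finsupp.prod_factorial_add]
      simp only [smul_eq_mul, map_mul, Complex.conj_conj, map_prod, map_natCast]
      ring

theorem eq_zero_of_fischerForm_self_eq_zero {f : MvPolynomial (Fin d) ℂ}
    (h : fischerForm f f = 0) : f = 0 := by
  by_contra hf
  have hpos : 0 < ∑ α ∈ f.support, Complex.normSq (coeff α f) * ∏ j, ((α j)! : ℝ) :=
    Finset.sum_pos (fun α hα => mul_pos (Complex.normSq_pos.mpr (mem_support_iff.mp hα))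
      (by positivity)) (support_nonempty.mpr hf)
  have hsum : fischerForm f f =
      ((∑ α ∈ f.support, Complex.normSq (coeff α f) * ∏ j, ((α j)! : ℝ) : ℝ) : ℂ) := by
    rw [fischerForm_eq_sum]
    push_cast
    simp only [Complex.normSq_eq_conj_mul_self]
  rw [h] at hsum
  exact hpos.ne (by exact_mod_cast hsum)

theorem diffOp_conjPoly_mul_eq_zero_iff {L p : MvPolynomial (Fin d) ℂ} :
    diffOp (conjPoly L) (L * p) = 0 ↔ L * p = 0 := by
  refine ⟨fun h => eq_zero_of_fischerForm_self_eq_zero ?_, fun h => by rw [h, map_zero]⟩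
  rw [fischerForm_mul_left, h, fischerForm_zero_right]

theorem fischer_eq_C_fischerForm {f F : MvPolynomial (Fin d) ℂ} {k : ℕ}
    (hf : f.IsHomogeneous k) (hF : F.IsHomogeneous k) : fischer f F = C (fischerForm f F) := by
  have h0 : (fischer f F).IsHomogeneous 0 := by
    simpa [fischer] using isHomogeneous_diffOp (isHomogeneous_conjPoly hF) hf
  exact totalDegree_eq_zero_iff_eq_C.mp ((totalDegree_zero_iff_isHomogeneous _).mpr h0)

theorem diffOp_conjPoly_eq_zero_iff_fischer_orthogonal {L q F : MvPolynomial (Fin d) ℂ}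
    {l k : ℕ} (hL : L.IsHomogeneous l) (hq : homogeneousComponent q.totalDegree q = L)
    (hF : F.IsHomogeneous k) :
    (∀ f : MvPolynomial (Fin d) ℂ,
        (∃ g ∈ Ideal.span {q}, homogeneousComponent g.totalDegree g = f) →
        f ∈ homogeneousSubmodule (Fin d) ℂ k → fischer f F = 0) ↔
      diffOp (conjPoly L) F = 0 := by
  constructor
  · intro horth
    rcases lt_or_ge k l with hkl | hlk
    · exact diffOp_eq_zero_of_lt (isHomogeneous_conjPoly hL) hF hkl
    set G := diffOp (conjPoly L) F
    have hG : G.IsHomogeneous (k - l) := isHomogeneous_diffOp (isHomogeneous_conjPoly hL) hF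
    have hLG : L * G ∈ homogeneousSubmodule (Fin d) ℂ k := by
      simpa [Nat.add_sub_cancel' hlk] using hL.mul hG
    have hqG : homogeneousComponent (q * G).totalDegree (q * G) = L * G := by
      rw [homogeneousComponent_totalDegree_mul_of_isHomogeneous q hG, hq]
    have h0 := horth (L * G) ⟨q * G, Ideal.mul_mem_right _ _ (Ideal.mem_span_singleton_self q),
      hqG⟩ hLG
    apply eq_zero_of_fischerForm_self_eq_zero
    rw [← fischerForm_mul_left, fischerForm, h0, coeff_zero]
  · rintro hF0 f ⟨g, hg, rfl⟩ hf
    obtain ⟨h, hgh⟩ := exists_homogeneousComponent_totalDegree_eq_mul_of_mem_span_singleton hg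
    rw [fischer_eq_C_fischerForm hf hF, hgh, hq, fischerForm_mul_left, hF0,
      fischerForm_zero_right, map_zero]

theorem map_diffOp_conjPoly_homogeneousSubmodule {L : MvPolynomial (Fin d) ℂ} {l k : ℕ}
    (hL0 : L ≠ 0) (hL : L.IsHomogeneous l) (hlk : l ≤ k) :
    (homogeneousSubmodule (Fin d) ℂ k).map (diffOp (conjPoly L)) =
      homogeneousSubmodule (Fin d) ℂ (k - l) := by
  have hD : ∀ p ∈ homogeneousSubmodule (Fin d) ℂ k,
      diffOp (conjPoly L) p ∈ homogeneousSubmodule (Fin d) ℂ (k - l) :=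
    fun _ hp => isHomogeneous_diffOp (isHomogeneous_conjPoly hL) hp
  have hmul : ∀ p ∈ homogeneousSubmodule (Fin d) ℂ (k - l),
      L * p ∈ homogeneousSubmodule (Fin d) ℂ k := fun _ hp => by
    simpa [Nat.add_sub_cancel' hlk] using hL.mul hp
  let E : Module.End ℂ (homogeneousSubmodule (Fin d) ℂ (k - l)) :=
    (diffOp (conjPoly L) ∘ₗ LinearMap.mulLeft ℂ L).restrict fun p hp => hD _ (hmul p hp)
  have hE : Function.Injective E := by
    refine (injective_iff_map_eq_zero E).mpr fun p hp => Subtype.ext ?_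
    have : diffOp (conjPoly L) (L * p) = 0 := congrArg Subtype.val hp
    exact (mul_eq_zero.mp (diffOp_conjPoly_mul_eq_zero_iff.mp this)).resolve_left hL0
  refine le_antisymm (Submodule.map_le_iff_le_comap.mpr hD) fun p hp => ?_
  obtain ⟨p', hp'⟩ := LinearMap.injective_iff_surjective.mp hE ⟨p, hp⟩
  exact ⟨L * p', hmul _ p'.2, congrArg Subtype.val hp'⟩

theorem finrank_ker_diffOp_conjPoly_inf_homogeneousSubmodule {L : MvPolynomial (Fin d) ℂ}
    {l k : ℕ} (hL0 : L ≠ 0) (hL : L.IsHomogeneous l) (hlk : l ≤ k) :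
    Module.finrank ℂ ↥(LinearMap.ker (diffOp (conjPoly L)) ⊓ homogeneousSubmodule (Fin d) ℂ k) =
      Module.finrank ℂ ↥(homogeneousSubmodule (Fin d) ℂ k) -
        Module.finrank ℂ ↥(homogeneousSubmodule (Fin d) ℂ (k - l)) := by
  have := Submodule.finrank_ker_inf_add_finrank_map (diffOp (conjPoly L))
    (homogeneousSubmodule (Fin d) ℂ k)
  rw [map_diffOp_conjPoly_homogeneousSubmodule hL0 hL hlk] at this
  omega

end

theorem fischer_orthocomplement_eq_kernel {d l : ℕ} (L : MvPolynomial (Fin d) ℂ)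
    (hL0 : L ≠ 0) (hL : L.IsHomogeneous l)
    (q : MvPolynomial (Fin d) ℂ) (hq : homogeneousComponent q.totalDegree q = L) :
    (∀ k : ℕ,
      {F : MvPolynomial (Fin d) ℂ | F ∈ homogeneousSubmodule (Fin d) ℂ k ∧
          ∀ f : MvPolynomial (Fin d) ℂ,
            (∃ g ∈ Ideal.span {q}, homogeneousComponent g.totalDegree g = f) →
            f ∈ homogeneousSubmodule (Fin d) ℂ k → fischer f F = 0} =
        {F : MvPolynomial (Fin d) ℂ | F ∈ LinearMap.ker (diffOp (conjPoly L)) ∧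
          F ∈ homogeneousSubmodule (Fin d) ℂ k}) ∧
    (∀ k : ℕ, l ≤ k →
      Module.finrank ℂ
          ↥(LinearMap.ker (diffOp (conjPoly L)) ⊓ homogeneousSubmodule (Fin d) ℂ k) =
        Module.finrank ℂ ↥(homogeneousSubmodule (Fin d) ℂ k) -
          Module.finrank ℂ ↥(homogeneousSubmodule (Fin d) ℂ (k - l))) := by
  refine ⟨fun k => Set.ext fun F => ?_,
    fun k hlk => finrank_ker_diffOp_conjPoly_inf_homogeneousSubmodule hL0 hL hlk⟩
  exact ⟨fun ⟨hF, horth⟩ =>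
      ⟨(diffOp_conjPoly_eq_zero_iff_fischer_orthogonal hL hq hF).mp horth, hF⟩,
    fun ⟨hker, hF⟩ => ⟨hF, (diffOp_conjPoly_eq_zero_iff_fischer_orthogonal hL hq hF).mpr hker⟩⟩
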